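/- Non-emptiness of the Can completion-code set: for every boolean flag b ∈ {+,−}, every Kernel Esterel program p, and every constructive event E, the set of completion codes Can^b_K(p, E) is non-empty. -/
import Mathlib


namespace EsterelCBS

/-- Signals are represented by natural numbers. -/
abbrev Signal := ℕ

/-- Kernel Esterel statements.  `done k` unifies `nothing` (k = 0), `pause` (k = 1)
and `exit k` (k ≥ 2).  `awaitImm pol s` waits for `s` to have the status given by
the polarity `pol` (`awaitImm true s` is the kernel statement `await immediate s`;
the negative polarity is used in the derivative of `suspend`). -/
inductive Stmt : Type
  | done (k : ℕ)
  | emit (s : Signal)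
  | awaitImm (pol : Bool) (s : Signal)
  | present (s : Signal) (p q : Stmt)
  | suspend (s : Signal) (p : Stmt)
  | seq (p q : Stmt)
  | par (p q : Stmt)
  | loop (p : Stmt)
  | trap (p : Stmt)
  | shift (p : Stmt)
  | sig (s : Signal) (p : Stmt)
  deriving DecidableEq

/-- Constructive signal statuses: present (+), absent (−), or unknown (⊥). -/
inductive CStatus : Type
  | pos
  | neg
  | bot
  deriving DecidableEq

/-- Statuses are combined by "present dominates, unknown next". -/
def CStatus.or : CStatus → CStatus → CStatus
  | .pos, _ => .pos
  | _, .pos => .pos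
  | .bot, _ => .bot
  | _, .bot => .bot
  | _, _ => .neg

/-- A constructive event is a finite map from signals to constructive statuses;
`none` means the signal is not in scope (not visible). -/
abbrev CEvent := Signal → Option CStatus

namespace CEvent

/-- The empty output event relative to `E`: every visible signal is absent. -/
def blank (E : CEvent) : CEvent := fun s => (E s).map fun _ => CStatus.neg

/-- The singleton output event emitting `s` (all other visible signals absent). -/
def single (E : CEvent) (s : Signal) : CEvent :=
  fun t => if t = s then (E t).map fun _ => CStatus.pos
           else (E t).map fun _ => CStatus.neg

/-- Union of two output events. -/
def union (E₁ E₂ : CEvent) : CEvent := fun s =>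
  match E₁ s, E₂ s with
  | some a, some b => some (a.or b)
  | some a, none => some a
  | none, o => o

/-- Update the status of a signal (possibly adding it to the domain). -/
def update (E : CEvent) (s : Signal) (v : CStatus) : CEvent :=
  fun t => if t = s then some v else E t

/-- Restriction of an output event by a local signal declaration: the binding of
the (new) signal `s` is replaced by the appropriate status − for the (old) `s`
(which is absent if the old `s` was not in scope). -/
def restrict (E' : CEvent) (s : Signal) (old : Option CStatus) : CEvent :=
  fun t => if t = s then old.map (fun _ => CStatus.neg) else E' t

/-- The domain of an event: the set of signals in scope. -/
def dom (E : CEvent) : Set Signal := {s | E s ≠ none}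

/-- A constructive event is total when no signal is mapped to ⊥. -/
def Total (E : CEvent) : Prop := ∀ s, E s ≠ some CStatus.bot

end CEvent

/-- Completion-code shift `↑` used by the `shift` statement. -/
def kup (k : ℕ) : ℕ := if 2 ≤ k then k + 1 else k

/-- Completion-code decrement `↓` used by the `trap` statement. -/
def kdown (k : ℕ) : ℕ := if k < 2 then k else if k = 2 then 0 else k - 1

/-- The δ function killing derivatives when the completion code is not 1. -/
def delta (k : ℕ) (p : Stmt) : Stmt := if k = 1 then p else .done 0

/-- The constructive status corresponding to a polarity. -/
def polSt : Bool → CStatus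
  | true => .pos
  | false => .neg

/-- Pairwise max of two sets of completion codes
(`Max K L = { max k l | k ∈ K, l ∈ L }`). -/
def codeMax (K L : Finset ℕ) : Finset ℕ := K.biUnion fun k => L.image (max k)

mutual

/-- `must p E = (Must_S(p,E), Must_K(p,E))`: the signals that must be emitted and
the completion codes that must be returned by `p` under `E` (paper Fig. 2). -/
def must : Stmt → CEvent → Finset Signal × Finset ℕ
  | .done k, _ => (∅, {k})
  | .emit s, _ => ({s}, {0})
  | .awaitImm pol s, E =>
      if E s = some (polSt pol) then (∅, {0})
      else if E s = some (polSt (!pol)) then (∅, {1})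
      else (∅, ∅)
  | .present s p q, E =>
      if E s = some .pos then must p E
      else if E s = some .neg then must q E
      else (∅, ∅)
  | .suspend _ p, E => must p E
  | .seq p q, E =>
      if 0 ∈ (must p E).2 then
        ((must p E).1 ∪ (must q E).1, (must q E).2)
      else must p E
  | .par p q, E =>
      ((must p E).1 ∪ (must q E).1, codeMax (must p E).2 (must q E).2)
  | .loop p, E => must p E
  | .trap p, E => ((must p E).1, (must p E).2.image kdown)
  | .shift p, E => ((must p E).1, (must p E).2.image kup)
  | .sig s p, E =>
      if s ∈ (must p (E.update s .bot)).1 then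
        (((must p (E.update s .pos)).1).erase s, (must p (E.update s .pos)).2)
      else if s ∉ (can true p (E.update s .bot)).1 then
        (((must p (E.update s .neg)).1).erase s, (must p (E.update s .neg)).2)
      else
        (((must p (E.update s .bot)).1).erase s, (must p (E.update s .bot)).2)

/-- `can b p E = (Can^b_S(p,E), Can^b_K(p,E))`: the signals that can be emitted
and the completion codes that can be returned by `p` under `E` (paper Fig. 2). -/
def can : Bool → Stmt → CEvent → Finset Signal × Finset ℕ
  | _, .done k, _ => (∅, {k})
  | _, .emit s, _ => ({s}, {0})
  | _, .awaitImm pol s, E =>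
      if E s = some (polSt pol) then (∅, {0})
      else if E s = some (polSt (!pol)) then (∅, {1})
      else (∅, {0, 1})
  | b, .present s p q, E =>
      if E s = some .pos then can b p E
      else if E s = some .neg then can b q E
      else ((can false p E).1 ∪ (can false q E).1,
            (can false p E).2 ∪ (can false q E).2)
  | b, .suspend _ p, E => can b p E
  | b, .seq p q, E =>
      if 0 ∉ (can b p E).2 then can b p E
      else if 0 ∈ (must p E).2 ∧ b = true then
        ((can b p E).1 ∪ (can true q E).1,
         ((can b p E).2.erase 0) ∪ (can true q E).2)
      else
        ((can b p E).1 ∪ (can false q E).1,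
         ((can b p E).2.erase 0) ∪ (can false q E).2)
  | b, .par p q, E =>
      ((can b p E).1 ∪ (can b q E).1, codeMax (can b p E).2 (can b q E).2)
  | b, .loop p, E => can b p E
  | b, .trap p, E => ((can b p E).1, (can b p E).2.image kdown)
  | b, .shift p, E => ((can b p E).1, (can b p E).2.image kup)
  | b, .sig s p, E =>
      if s ∈ (must p (E.update s .bot)).1 ∧ b = true then
        (((can b p (E.update s .pos)).1).erase s, (can b p (E.update s .pos)).2)
      else if s ∉ (can true p (E.update s .bot)).1 then
        (((can b p (E.update s .neg)).1).erase s, (can b p (E.update s .neg)).2)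
      else
        (((can b p (E.update s .bot)).1).erase s, (can b p (E.update s .bot)).2)

end

/-- The constructive behavioral semantics (CBS): `CBS E p E' k p'` means
`E ⊢ p → (E', k, p')`.  The rules are the same as for the logical behavioral
semantics except for the local signal declaration rules, which use `must`/`can`. -/
inductive CBS : CEvent → Stmt → CEvent → ℕ → Stmt → Prop
  | done {E : CEvent} {k : ℕ} :
      CBS E (.done k) E.blank k (.done 0)
  | emit {E : CEvent} {s : Signal} (h : E s ≠ none) :
      CBS E (.emit s) (E.single s) 0 (.done 0)
  | awaitP {E : CEvent} {pol : Bool} {s : Signal}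
      (h : E s = some (polSt pol)) :
      CBS E (.awaitImm pol s) E.blank 0 (.done 0)
  | awaitM {E : CEvent} {pol : Bool} {s : Signal}
      (h : E s = some (polSt (!pol))) :
      CBS E (.awaitImm pol s) E.blank 1 (.awaitImm pol s)
  | presentP {E E' : CEvent} {s : Signal} {p q p' : Stmt} {k : ℕ}
      (h : E s = some .pos) (hp : CBS E p E' k p') :
      CBS E (.present s p q) E' k p'
  | presentM {E E' : CEvent} {s : Signal} {p q q' : Stmt} {k : ℕ}
      (h : E s = some .neg) (hq : CBS E q E' k q') :
      CBS E (.present s p q) E' k q'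
  | suspend {E E' : CEvent} {s : Signal} {p p' : Stmt} {k : ℕ}
      (hp : CBS E p E' k p') :
      CBS E (.suspend s p) E' k
        (delta k (.seq (.awaitImm false s) (.suspend s p')))
  | seqK {E E' : CEvent} {p q p' : Stmt} {k : ℕ}
      (h : k ≠ 0) (hp : CBS E p E' k p') :
      CBS E (.seq p q) E' k (delta k (.seq p' q))
  | seq0 {E E₁ E₂ : CEvent} {p q p' q' : Stmt} {k : ℕ}
      (hp : CBS E p E₁ 0 p') (hq : CBS E q E₂ k q') :
      CBS E (.seq p q) (E₁.union E₂) k q'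
  | loop {E E' : CEvent} {p p' : Stmt} {k : ℕ}
      (h : k ≠ 0) (hp : CBS E p E' k p') :
      CBS E (.loop p) E' k (delta k (.seq p' (.loop p)))
  | trap {E E' : CEvent} {p p' : Stmt} {k : ℕ}
      (hp : CBS E p E' k p') :
      CBS E (.trap p) E' (kdown k) (delta k (.trap p'))
  | shift {E E' : CEvent} {p p' : Stmt} {k : ℕ}
      (hp : CBS E p E' k p') :
      CBS E (.shift p) E' (kup k) (delta k (.shift p'))
  | par {E E₁ E₂ : CEvent} {p q p' q' : Stmt} {k₁ k₂ : ℕ}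
      (hp : CBS E p E₁ k₁ p') (hq : CBS E q E₂ k₂ q') :
      CBS E (.par p q) (E₁.union E₂) (max k₁ k₂)
        (delta (max k₁ k₂) (.par p' q'))
  | sigP {E E' : CEvent} {s : Signal} {p p' : Stmt} {k : ℕ}
      (h : s ∈ (must p (E.update s .bot)).1)
      (hp : CBS (E.update s .pos) p E' k p') :
      CBS E (.sig s p) (E'.restrict s (E s)) k (delta k (.sig s p'))
  | sigM {E E' : CEvent} {s : Signal} {p p' : Stmt} {k : ℕ}
      (h : s ∉ (can true p (E.update s .bot)).1)
      (hp : CBS (E.update s .neg) p E' k p') :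
      CBS E (.sig s p) (E'.restrict s (E s)) k (delta k (.sig s p'))

end EsterelCBS

namespace EsterelCBS

/-- **Non-emptiness of the Can completion-code set**: for every flag `b`,
program `p` and constructive event `E`, the set `Can^b_K(p,E)` is non-empty. -/
theorem canK_nonempty :
    ∀ (b : Bool) (p : Stmt) (E : CEvent), (can b p E).2.Nonempty := by
  have hmax : ∀ {K L : Finset ℕ}, K.Nonempty → L.Nonempty → (codeMax K L).Nonempty := by
    rintro K L ⟨k, hk⟩ ⟨l, hl⟩
    exact ⟨max k l, Finset.mem_biUnion.2 ⟨k, hk, Finset.mem_image.2 ⟨l, hl, rfl⟩⟩⟩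
  intro b p
  induction p generalizing b with
  | done k => intro E; exact ⟨k, by simp [can]⟩
  | emit s => intro E; exact ⟨0, by simp [can]⟩
  | awaitImm pol s =>
      intro E; rw [can]
      split
      · exact ⟨0, by simp⟩
      · split
        · exact ⟨1, by simp⟩
        · exact ⟨0, by simp⟩
  | present s p q ihp ihq =>
      intro E; rw [can]
      split
      · exact ihp b E
      · split
        · exact ihq b E
        · exact (ihp false E).mono (by simp)
  | suspend s p ihp => intro E; rw [can]; exact ihp b E
  | seq p q ihp ihq =>
      intro E; rw [can]
      split
      · exact ihp b E
      · split
        · exact (ihq true E).mono (by simp)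
        · exact (ihq false E).mono (by simp)
  | par p q ihp ihq => intro E; rw [can]; exact hmax (ihp b E) (ihq b E)
  | loop p ihp => intro E; rw [can]; exact ihp b E
  | trap p ihp => intro E; rw [can]; exact (ihp b E).image kdown
  | shift p ihp => intro E; rw [can]; exact (ihp b E).image kup
  | sig s p ihp =>
      intro E; rw [can]
      split
      · exact ihp b _
      · split
        · exact ihp b _
        · exact ihp b _

end EsterelCBS
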